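/- arXiv:2510.11338 — 2 statements merged into one kernel-verified Lean document; each statement's English description precedes it below -/
import Mathlib

section
/- For any nonnegative integers k, l and real x not equal to 0,-1,-2,...,-(k+l), the sum over n from 0 to k+l of (-1)^(k+l+n)/(x+n) * C(n,l)*C(l,n-k) equals (x)_l * (x)_k / (x)_{k+l+1}. -/
/-!
After cancelling `(x)_k`, the right-hand side is `(x)_l / ∏_{j ≤ l} (x + k + j)`, a proper rational
function with simple poles at the nodes `-(k + j)`. Lagrange interpolation of `(X)_l` at these
nodes gives its partial fraction decomposition, whose coefficient at `-(k + j)` is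
`(-(k + j))_l / ∏_{i ≠ j} (i - j) = (-1)^(l + j) C(k + j, l) C(l, j)`. The terms `n < k` of the
sum vanish, and the substitution `n = k + j` identifies the rest with this decomposition.
-/

open Finset Polynomial Lagrange
open scoped Nat

theorem Lagrange.eval_div_eval_nodal_eq_sum {F ι : Type*} [Field F] [DecidableEq ι]
    {s : Finset ι} {v : ι → F} {f : F[X]} {x : F} (hvs : Set.InjOn v s) (hf : f.degree < #s)
    (hx : ∀ i ∈ s, x ≠ v i) :
    f.eval x / (nodal s v).eval x = ∑ i ∈ s, nodalWeight s v i * f.eval (v i) / (x - v i) := by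
  conv_lhs => rw [eq_interpolate hvs hf]
  rw [eval_interpolate_not_at_node _ hx, mul_div_cancel_left₀ _ (eval_nodal_not_at_node hx)]
  exact sum_congr rfl fun i _ => by ring

theorem prod_range_natCast_sub_self {R : Type*} [CommRing R] (j : ℕ) :
    ∏ i ∈ range j, ((i : R) - j) = (-1) ^ j * j ! := by
  calc ∏ i ∈ range j, ((i : R) - j) = ∏ i ∈ range j, (-1 * ((i : R) + 1)) := by
        rw [← prod_range_reflect]
        refine prod_congr rfl fun i hi => ?_
        rw [Nat.cast_sub (by simp at hi; omega), Nat.cast_sub (by simp at hi; omega)]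
        push_cast
        ring
    _ = (-1) ^ j * j ! := by
        rw [prod_mul_distrib, prod_const, card_range, Nat.factorial_eq_prod_range_add_one]
        push_cast
        rfl

theorem prod_erase_range_natCast_sub {R : Type*} [CommRing R] {l j : ℕ} (hj : j ≤ l) :
    ∏ i ∈ (range (l + 1)).erase j, ((i : R) - j) = (-1) ^ j * j ! * (l - j)! := by
  let g : ℕ → R := fun i => if i = j then 1 else (i : R) - j
  have hg : ∏ i ∈ (range (l + 1)).erase j, ((i : R) - j) = ∏ i ∈ range (l + 1), g i := by
    rw [← mul_prod_erase _ g (mem_range.2 (Nat.lt_succ_of_le hj)), show g j = 1 from if_pos rfl,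
      one_mul]
    exact prod_congr rfl fun i hi => (if_neg (ne_of_mem_erase hi)).symm
  have hbelow : ∏ i ∈ range j, g i = (-1) ^ j * j ! := by
    rw [← prod_range_natCast_sub_self]
    exact prod_congr rfl fun i hi => if_neg (by simp at hi; omega)
  have habove : ∏ i ∈ range (l - j), g (j + 1 + i) = (l - j)! := by
    rw [Nat.factorial_eq_prod_range_add_one]
    push_cast
    refine prod_congr rfl fun i _ => ?_
    simp only [g, if_neg (show j + 1 + i ≠ j by omega)]
    push_cast
    ring
  rw [hg, show l + 1 = j + 1 + (l - j) by omega, prod_range_add, prod_range_succ, hbelow, habove,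
    show g j = 1 from if_pos rfl, mul_one]

theorem Lagrange.nodalWeight_range_sub_natCast {F : Type*} [Field F] [CharZero F] (a : F)
    {l j : ℕ} (hj : j ≤ l) :
    nodalWeight (range (l + 1)) (fun i => a - i) j = (-1) ^ j * l.choose j / l ! := by
  have hdiff : ∀ i ∈ (range (l + 1)).erase j, (a - j) - (a - i) = (i : F) - j := fun i _ => by ring
  rw [nodalWeight, prod_inv_distrib, prod_congr rfl hdiff, prod_erase_range_natCast_sub hj,
    ← Nat.choose_mul_factorial_mul_factorial hj]
  have hchoose : (l.choose j : F) ≠ 0 := Nat.cast_ne_zero.2 (Nat.choose_pos hj).ne'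
  push_cast
  field_simp
  rw [← pow_mul, pow_mul', neg_one_sq, one_pow]

theorem ascPochhammer_eval_eq_prod_range {S : Type*} [CommSemiring S] (n : ℕ) (x : S) :
    (ascPochhammer S n).eval x = ∏ i ∈ range n, (x + i) := by
  induction n with
  | zero => simp
  | succ n ih => rw [ascPochhammer_succ_eval, ih, prod_range_succ]

theorem ascPochhammer_eval_neg_natCast {R : Type*} [CommRing R] (n l : ℕ) :
    (ascPochhammer R l).eval (-(n : R)) = (-1) ^ l * l ! * n.choose l := by
  rw [ascPochhammer_eval_neg_eq_descPochhammer, descPochhammer_eval_eq_descFactorial,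
    Nat.descFactorial_eq_factorial_mul_choose]
  push_cast
  ring

theorem ascPochhammer_eval_div_prod_eq_sum {F : Type*} [Field F] [CharZero F] (k l : ℕ) {x : F}
    (hx : ∀ j ≤ l, x + (k + j : ℕ) ≠ 0) :
    (ascPochhammer F l).eval x / ∏ j ∈ range (l + 1), (x + (k + j : ℕ)) =
      ∑ j ∈ range (l + 1), (-1) ^ (l + j) * (k + j).choose l * l.choose j / (x + (k + j : ℕ)) := by
  set v : ℕ → F := fun j => -(k : F) - j
  have hv : ∀ j, v j = -((k + j : ℕ) : F) := fun j => by push_cast; ring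
  have hinj : Set.InjOn v (range (l + 1)) := fun i _ j _ h => by simpa [v] using h
  have hdeg : (ascPochhammer F l).degree < #(range (l + 1)) := by
    rw [degree_eq_natDegree (monic_ascPochhammer F l).ne_zero, ascPochhammer_natDegree, card_range]
    exact_mod_cast Nat.lt_succ_self l
  have hxv : ∀ j ∈ range (l + 1), x ≠ v j := fun j hj h =>
    hx j (Nat.lt_succ_iff.1 (mem_range.1 hj)) (by rw [h, hv]; ring)
  have hnodal : (nodal (range (l + 1)) v).eval x = ∏ j ∈ range (l + 1), (x + (k + j : ℕ)) := by
    rw [eval_nodal]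
    exact prod_congr rfl fun j _ => by rw [hv]; ring
  rw [← hnodal, eval_div_eval_nodal_eq_sum hinj hdeg hxv]
  refine sum_congr rfl fun j hj => ?_
  have hjl := Nat.lt_succ_iff.1 (mem_range.1 hj)
  have hxj := hx j hjl
  have hfact : (l ! : F) ≠ 0 := Nat.cast_ne_zero.2 l.factorial_ne_zero
  rw [nodalWeight_range_sub_natCast _ hjl, hv, ascPochhammer_eval_neg_natCast, sub_neg_eq_add]
  field_simp
  ring

theorem stmt_6 (k l : ℕ) (x : ℝ) (hx : ∀ n : ℕ, n ≤ k + l → x + n ≠ 0) :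
    ∑ n ∈ Finset.range (k+l+1),
      (-1)^(k+l+n) / (x + n) * (n.choose l) * (if k ≤ n then (l.choose (n - k) : ℝ) else 0)
    = (∏ i ∈ Finset.range l, (x + i)) * (∏ i ∈ Finset.range k, (x + i))
        / (∏ i ∈ Finset.range (k+l+1), (x + i)) := by
  have hk : ∏ i ∈ range k, (x + i) ≠ 0 :=
    prod_ne_zero_iff.2 fun i hi => hx i (by simp at hi; omega)
  rw [show k + l + 1 = k + (l + 1) by omega, prod_range_add, mul_comm (∏ i ∈ range l, _),
    mul_div_mul_left _ _ hk, ← ascPochhammer_eval_eq_prod_range,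
    ascPochhammer_eval_div_prod_eq_sum k l fun j hj => hx (k + j) (by omega), sum_range_add,
    sum_eq_zero fun n hn => by rw [if_neg (by simpa using hn), mul_zero], zero_add]
  refine sum_congr rfl fun j _ => ?_
  have hsign : (-1 : ℝ) ^ (k + l + (k + j)) = (-1) ^ (l + j) := by
    rw [show k + l + (k + j) = l + j + 2 * k by ring, pow_add, pow_mul, neg_one_sq, one_pow,
      mul_one]
  rw [if_pos (Nat.le_add_right k j), Nat.add_sub_cancel_left, hsign]
  ring
end

section
/- For any prime p and any nonnegative integers k, l, the sum over n from 0 to p-1 of (n+1)*C(n,k)*C(n,l) equals the sum over n from 0 to k+l of (p(p+1)/(n+2)) * C(n,l)*C(l,n-k)*C(p-1,n). -/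
/-!
Expanding `C(n,k) C(n,l) = ∑ₘ C(m,l) C(l,m-k) C(n,m)` (count pairs of a `k`-set and an `l`-set by
their union, of size `m`) and exchanging the sums reduces the left side to the weighted hockey-stick
sums `∑_{n<p} (n+1) C(n,m) = (m+1) C(p+1,m+2)`, and `(m+1) C(p+1,m+2) = p(p+1)/(m+2) C(p-1,m)`.
-/

open Finset

namespace Nat

theorem choose_add_mul_choose (k r j : ℕ) :
    (k + r).choose k * r.choose j = (k + r).choose (k + j) * (k + j).choose k := by
  simpa using (choose_mul (n := k + r) (k := k + j) (Nat.le_add_right k j)).symm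

theorem choose_add_mul_choose_sub {k j l : ℕ} (hjl : j ≤ l) :
    (k + j).choose k * k.choose (l - j) = (k + j).choose l * l.choose j := by
  rw [choose_mul hjl, Nat.add_sub_cancel, choose_symm_add]

theorem choose_mul_choose_eq_sum_range (n k l : ℕ) :
    n.choose k * n.choose l =
      ∑ j ∈ range (l + 1), (k + j).choose l * l.choose j * n.choose (k + j) := by
  rcases lt_or_ge n k with hnk | hkn
  · rw [choose_eq_zero_of_lt hnk, zero_mul]
    exact (sum_eq_zero fun j _ ↦ by simp [choose_eq_zero_of_lt (show n < k + j by omega)]).symm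
  obtain ⟨r, rfl⟩ := Nat.exists_eq_add_of_le hkn
  rw [add_choose_eq k r l, mul_sum, ← Nat.sum_antidiagonal_swap]
  simp only [Prod.fst_swap, Prod.snd_swap]
  rw [Nat.sum_antidiagonal_eq_sum_range_succ
    (fun j i ↦ (k + r).choose k * (k.choose i * r.choose j))]
  refine sum_congr rfl fun j hj ↦ ?_
  have hjl : j ≤ l := Nat.lt_succ_iff.mp (mem_range.mp hj)
  calc (k + r).choose k * (k.choose (l - j) * r.choose j)
      = (k + r).choose k * r.choose j * k.choose (l - j) := by ring
    _ = (k + r).choose (k + j) * ((k + j).choose k * k.choose (l - j)) := by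
      rw [choose_add_mul_choose, mul_assoc]
    _ = (k + j).choose l * l.choose j * (k + r).choose (k + j) := by
      rw [choose_add_mul_choose_sub hjl]; ring

theorem choose_mul_choose_eq_sum_range_ite (n k l : ℕ) :
    n.choose k * n.choose l =
      ∑ m ∈ range (k + l + 1),
        m.choose l * (if k ≤ m then l.choose (m - k) else 0) * n.choose m := by
  rw [add_assoc, sum_range_add, sum_eq_zero fun m hm ↦ by simp [(mem_range.mp hm).not_ge],
    zero_add, choose_mul_choose_eq_sum_range]
  simp

theorem sum_range_add_one_mul_choose (p m : ℕ) :
    ∑ n ∈ range p, (n + 1) * n.choose m = (m + 1) * (p + 1).choose (m + 2) := by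
  induction p with
  | zero => simp [choose_eq_zero_of_lt]
  | succ p ih =>
    rw [sum_range_succ, ih, add_one_mul_choose_eq, choose_succ_succ' (p + 1) (m + 1)]
    ring

theorem mul_add_one_mul_choose_sub_one (p m : ℕ) :
    p * (p + 1) * (p - 1).choose m = (m + 1) * (m + 2) * (p + 1).choose (m + 2) := by
  cases p with
  | zero => simp [choose_eq_zero_of_lt]
  | succ q =>
    calc (q + 1) * (q + 1 + 1) * (q + 1 - 1).choose m
        = (q + 1 + 1) * ((q + 1) * q.choose m) := by rw [Nat.add_sub_cancel]; ring
      _ = (m + 1) * ((q + 1 + 1) * (q + 1).choose (m + 1)) := by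
        rw [add_one_mul_choose_eq]; ring
      _ = (m + 1) * (m + 2) * (q + 1 + 1).choose (m + 2) := by
        rw [add_one_mul_choose_eq]; ring

theorem cast_mul_add_one_div_mul_choose_sub_one (p m : ℕ) :
    (p : ℚ) * (p + 1) / (m + 2) * (p - 1).choose m = (m + 1) * (p + 1).choose (m + 2) := by
  have h := congrArg (Nat.cast (R := ℚ)) (mul_add_one_mul_choose_sub_one p m)
  push_cast at h
  rw [div_mul_eq_mul_div, h]
  field_simp

end Nat

theorem stmt_10_general (p : ℕ) (k l : ℕ) :
    ∑ n ∈ Finset.range p, ((n : ℚ) + 1) * (n.choose k) * (n.choose l)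
    = ∑ n ∈ Finset.range (k+l+1),
        ((p : ℚ) * ((p : ℚ) + 1) / ((n : ℚ) + 2)) * (n.choose l)
          * (if k ≤ n then (l.choose (n - k) : ℚ) else 0) * ((p-1).choose n) := by
  have hprod (n : ℕ) := congrArg (Nat.cast (R := ℚ)) (Nat.choose_mul_choose_eq_sum_range_ite n k l)
  have hhockey (m : ℕ) := congrArg (Nat.cast (R := ℚ)) (Nat.sum_range_add_one_mul_choose p m)
  push_cast at hprod hhockey
  simp_rw [mul_assoc _ (Nat.choose _ k : ℚ), hprod, mul_sum]
  rw [sum_comm]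
  refine sum_congr rfl fun m _ ↦ ?_
  calc ∑ n ∈ range p, ((n : ℚ) + 1) * ((m.choose l : ℚ) *
          (if k ≤ m then (l.choose (m - k) : ℚ) else 0) * n.choose m)
      = (m.choose l : ℚ) * (if k ≤ m then (l.choose (m - k) : ℚ) else 0) *
          ∑ n ∈ range p, ((n : ℚ) + 1) * n.choose m := by
        rw [mul_sum]; exact sum_congr rfl fun n _ ↦ by ring
    _ = _ := by rw [hhockey, ← Nat.cast_mul_add_one_div_mul_choose_sub_one]; ring

theorem stmt_10 (p : ℕ) (hp : p.Prime) (k l : ℕ) :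
    ∑ n ∈ Finset.range p, ((n : ℚ) + 1) * (n.choose k) * (n.choose l)
    = ∑ n ∈ Finset.range (k+l+1),
        ((p : ℚ) * ((p : ℚ) + 1) / ((n : ℚ) + 2)) * (n.choose l)
          * (if k ≤ n then (l.choose (n - k) : ℚ) else 0) * ((p-1).choose n) :=
  stmt_10_general p k l
end
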